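/- arXiv:2109.06701 — 2 statements merged into one kernel-verified Lean document; each statement's English description precedes it below -/
import Mathlib

section
/- The Stieltjes transform m(z) of the semicircle law with density (1/(2π))√(4−x²) on [−2,2] satisfies the equation m(z) = −1/(z + m(z)) for all z in the upper half plane. -/
/-!
Substituting `x = 2 cos θ` turns `m` into `(2π)⁻¹ ∫₀^π 4 sin² θ / (2 cos θ - z) dθ`. Writing
`z = -(s + s⁻¹)` with `‖s‖ < 1`, the integrand is a trigonometric polynomial minus a multiple of
the kernel `(1 - s²) / (1 + 2 s cos θ + s²) = (1 - s²) / ((1 + s e^{iθ}) (1 + s e^{-iθ}))`, which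
has the antiderivative `θ + i (log (1 + s e^{iθ}) - log (1 + s e^{-iθ}))` and hence integral `π`
over `[0, π]`. This gives `m = s`, and `s = -1 / (z + s)` is the quadratic `s² + z s + 1 = 0`.
-/

open Complex intervalIntegral
open scoped Real

theorem im_add_inv_eq_zero_of_norm_eq_one {s : ℂ} (hs : ‖s‖ = 1) : (s + s⁻¹).im = 0 := by
  rw [inv_eq_conj hs, add_conj, ofReal_im]

theorem exists_norm_lt_one_eq_neg_add_inv {z : ℂ} (hz : z.im ≠ 0) :
    ∃ s : ℂ, s ≠ 0 ∧ ‖s‖ < 1 ∧ z = -(s + s⁻¹) := by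
  obtain ⟨w, hw⟩ := IsAlgClosed.exists_eq_mul_self (z ^ 2 - 4)
  have hroot : ((-z + w) / 2) * ((-z - w) / 2) = 1 := by linear_combination hw / 4
  set t := (-z + w) / 2
  have ht : t ≠ 0 := left_ne_zero_of_mul_eq_one hroot
  have hzt : z = -(t + t⁻¹) := by
    rw [inv_eq_of_mul_eq_one_right hroot]; ring
  rcases lt_trichotomy ‖t‖ 1 with h | h | h
  · exact ⟨t, ht, h, hzt⟩
  · exact absurd (by rw [hzt, neg_im, im_add_inv_eq_zero_of_norm_eq_one h, neg_zero]) hz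
  · refine ⟨t⁻¹, inv_ne_zero ht, ?_, by rw [inv_inv, add_comm, hzt]⟩
    rw [norm_inv]; exact inv_lt_one_of_one_lt₀ h

theorem integral_neg_two_two_eq_integral_two_cos {E : Type*} [NormedAddCommGroup E]
    [NormedSpace ℝ E] (g : ℝ → E) :
    ∫ x in (-2 : ℝ)..2, g x = ∫ θ in (0 : ℝ)..π, (2 * Real.sin θ) • g (2 * Real.cos θ) := by
  have hsubst := integral_deriv_smul_comp_of_deriv_nonpos (g := g) (a := 0) (b := π)
    (f := fun θ => 2 * Real.cos θ) (f' := fun θ => -2 * Real.sin θ) (by fun_prop)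
    (fun θ _ => by simpa using (Real.hasDerivAt_cos θ).const_mul 2)
    (fun θ hθ => by
      rw [min_eq_left Real.pi_pos.le, max_eq_right Real.pi_pos.le] at hθ
      nlinarith [Real.sin_pos_of_pos_of_lt_pi hθ.1 hθ.2])
  norm_num [Function.comp_def] at hsubst
  rw [integral_symm, ← hsubst, neg_neg]

theorem integral_sqrt_four_sub_sq_smul {E : Type*} [NormedAddCommGroup E] [NormedSpace ℝ E]
    (g : ℝ → E) :
    ∫ x in (-2 : ℝ)..2, √(4 - x ^ 2) • g x
      = ∫ θ in (0 : ℝ)..π, (4 * Real.sin θ ^ 2) • g (2 * Real.cos θ) := by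
  rw [integral_neg_two_two_eq_integral_two_cos]
  refine integral_congr fun θ hθ => ?_
  rw [Set.uIcc_of_le Real.pi_pos.le] at hθ
  have hsqrt : √(4 - (2 * Real.cos θ) ^ 2) = 2 * Real.sin θ := by
    rw [Real.sin_eq_sqrt_one_sub_cos_sq hθ.1 hθ.2, ← Real.sqrt_sq zero_le_two,
      ← Real.sqrt_mul (by norm_num)]
    congr 1
    ring
  simp only [hsqrt, smul_smul]
  ring_nf

theorem one_add_mul_exp_mul_one_add_mul_exp_neg (s θ : ℂ) :
    (1 + s * exp (θ * I)) * (1 + s * exp (-θ * I)) = 1 + 2 * s * cos θ + s ^ 2 := by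
  have hprod : exp (θ * I) * exp (-θ * I) = 1 := by
    rw [← exp_add, neg_mul, add_neg_cancel, exp_zero]
  linear_combination (-s) * two_cos θ + s ^ 2 * hprod

theorem one_add_mul_exp_ofReal_mul_I_mem_slitPlane {s : ℂ} (hs : ‖s‖ < 1) (θ : ℝ) :
    1 + s * exp (θ * I) ∈ slitPlane :=
  mem_slitPlane_of_norm_lt_one (by rwa [norm_mul, norm_exp_ofReal_mul_I, mul_one])

theorem one_add_two_mul_mul_cos_add_sq_ne_zero {s : ℂ} (hs : ‖s‖ < 1) (θ : ℝ) :
    1 + 2 * s * Real.cos θ + s ^ 2 ≠ 0 := by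
  rw [ofReal_cos, ← one_add_mul_exp_mul_one_add_mul_exp_neg, ← ofReal_neg]
  exact mul_ne_zero (slitPlane_ne_zero (one_add_mul_exp_ofReal_mul_I_mem_slitPlane hs θ))
    (slitPlane_ne_zero (one_add_mul_exp_ofReal_mul_I_mem_slitPlane hs (-θ)))

theorem continuous_one_sub_sq_div_one_add_two_mul_mul_cos_add_sq {s : ℂ} (hs : ‖s‖ < 1) :
    Continuous fun θ : ℝ => (1 - s ^ 2) / (1 + 2 * s * Real.cos θ + s ^ 2) :=
  continuous_const.div (by fun_prop) (one_add_two_mul_mul_cos_add_sq_ne_zero hs)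

theorem hasDerivAt_log_one_add_mul_exp_ofReal_mul_I {s : ℂ} (hs : ‖s‖ < 1) (θ : ℝ) :
    HasDerivAt (fun t : ℝ => log (1 + s * exp (t * I)))
      (s * exp (θ * I) * I / (1 + s * exp (θ * I))) θ := by
  have hexp : HasDerivAt (fun t : ℝ => exp (t * I)) (exp (θ * I) * I) θ := by
    simpa using ((hasDerivAt_id (θ : ℂ)).mul_const I).cexp.comp_ofReal
  simpa [mul_assoc] using
    ((hexp.const_mul s).const_add 1).clog_real (one_add_mul_exp_ofReal_mul_I_mem_slitPlane hs θ)

theorem integral_one_sub_sq_div_one_add_two_mul_mul_cos_add_sq {s : ℂ} (hs : ‖s‖ < 1) :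
    ∫ θ in (0 : ℝ)..π, (1 - s ^ 2) / (1 + 2 * s * Real.cos θ + s ^ 2) = (π : ℂ) := by
  set L : ℝ → ℂ := fun t => log (1 + s * exp (t * I))
  have hK : ∀ θ : ℝ, HasDerivAt (fun t : ℝ => (t : ℂ) + I * (L t - L (-t)))
      ((1 - s ^ 2) / (1 + 2 * s * Real.cos θ + s ^ 2)) θ := by
    intro θ
    have hL := hasDerivAt_log_one_add_mul_exp_ofReal_mul_I hs
    refine ((ofRealCLM.hasDerivAt (x := θ)).add
      (((hL θ).sub ((hL (-θ)).scomp θ (hasDerivAt_neg θ))).const_mul I)).congr_deriv ?_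
    have h₁ := slitPlane_ne_zero (one_add_mul_exp_ofReal_mul_I_mem_slitPlane hs θ)
    have h₂ := slitPlane_ne_zero (one_add_mul_exp_ofReal_mul_I_mem_slitPlane hs (-θ))
    have hprod : exp (θ * I) * exp (-θ * I) = 1 := by
      rw [← exp_add, neg_mul, add_neg_cancel, exp_zero]
    simp only [ofRealCLM_apply, ofReal_one, neg_smul, one_smul, ofReal_neg] at h₂ ⊢
    rw [ofReal_cos, ← one_add_mul_exp_mul_one_add_mul_exp_neg]
    generalize exp (θ * I) = u at h₁ hprod ⊢
    generalize exp (-θ * I) = v at h₂ hprod ⊢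
    field_simp
    linear_combination (-s ^ 2) * hprod + (s * u + s * v + 2 * s ^ 2 * u * v) * I_sq
  rw [integral_eq_sub_of_hasDerivAt (fun θ _ => hK θ)
    ((continuous_one_sub_sq_div_one_add_two_mul_mul_cos_add_sq hs).intervalIntegrable _ _)]
  have hpi : exp ((-π : ℝ) * I) = exp (π * I) := by
    rw [ofReal_neg, neg_mul, exp_neg, exp_pi_mul_I, inv_neg, inv_one]
  simp only [L, neg_zero, hpi, sub_self, mul_zero, add_zero, ofReal_zero, sub_zero]

theorem integral_four_sin_sq_div_two_cos_add_add_inv {s : ℂ} (hs0 : s ≠ 0) (hs : ‖s‖ < 1) :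
    ∫ θ in (0 : ℝ)..π, 4 * (Real.sin θ : ℂ) ^ 2 / (2 * Real.cos θ + (s + s⁻¹)) = 2 * π * s := by
  have hdiv : ∀ θ : ℝ, 4 * (Real.sin θ : ℂ) ^ 2 / (2 * Real.cos θ + (s + s⁻¹))
      = (s + s⁻¹) - 2 * Real.cos θ
        - (1 - s ^ 2) / s * ((1 - s ^ 2) / (1 + 2 * s * Real.cos θ + s ^ 2)) := by
    intro θ
    have hP := one_add_two_mul_mul_cos_add_sq_ne_zero hs θ
    have hsc : (Real.sin θ : ℂ) ^ 2 = 1 - Real.cos θ ^ 2 := by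
      exact_mod_cast Real.sin_sq θ
    have hDP : 2 * (Real.cos θ : ℂ) + (s + s⁻¹) = (1 + 2 * s * Real.cos θ + s ^ 2) / s := by
      field_simp; ring
    rw [hsc, hDP]
    generalize (Real.cos θ : ℂ) = c at hP ⊢
    have hP' : 1 + c * 2 * s + s ^ 2 ≠ 0 := by convert hP using 1; ring
    field_simp
    ring
  simp only [hdiv]
  have hkernel := continuous_one_sub_sq_div_one_add_two_mul_mul_cos_add_sq hs
  rw [integral_sub (Continuous.intervalIntegrable (by fun_prop) _ _)
    ((hkernel.intervalIntegrable _ _).const_mul _),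
    integral_sub intervalIntegrable_const (Continuous.intervalIntegrable (by fun_prop) _ _),
    integral_const_mul, integral_const_mul, integral_const, intervalIntegral.integral_ofReal,
    integral_cos, integral_one_sub_sq_div_one_add_two_mul_mul_cos_add_sq hs]
  simp only [sub_zero, real_smul, Real.sin_pi, Real.sin_zero, sub_self, ofReal_zero, mul_zero]
  field_simp
  ring

/-- The Stieltjes transform of the semicircle law satisfies `m(z) = -1/(z + m(z))`
on the upper half plane. -/
theorem semicircle_stieltjes_eq (z : ℂ) (hz : 0 < z.im) (m : ℂ)
    (hm : m = ∫ x in (-2:ℝ)..2,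
      ((Real.sqrt (4 - x ^ 2) / (2 * Real.pi) : ℝ) : ℂ) / ((x : ℂ) - z)) :
    m = -1 / (z + m) := by
  obtain ⟨s, hs0, hs, rfl⟩ := exists_norm_lt_one_eq_neg_add_inv hz.ne'
  have hms : m = s := calc
    m = ∫ x in (-2 : ℝ)..2, √(4 - x ^ 2) • ((2 * π : ℂ)⁻¹ / ((x : ℂ) + (s + s⁻¹))) := by
      rw [hm]; congr 1; ext x; rw [real_smul]; push_cast; ring
    _ = (2 * π : ℂ)⁻¹ *
        ∫ θ in (0 : ℝ)..π, 4 * (Real.sin θ : ℂ) ^ 2 / (2 * Real.cos θ + (s + s⁻¹)) := by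
      rw [integral_sqrt_four_sub_sq_smul, ← integral_const_mul]
      congr 1; ext θ; rw [real_smul]; push_cast; ring
    _ = s := by
      rw [integral_four_sin_sq_div_two_cos_add_add_inv hs0 hs]
      field_simp
  rw [hms]
  field_simp
  ring
end

section
/- Let B be an n×n Hermitian matrix, z = u+iv with v > 0, and B₁ the principal submatrix obtained by deleting the first row and column. Then |tr((B−zI_n)^{-1}) − tr((B₁−zI_{n−1})^{-1})| ≤ 1/v. -/
/-!
Write `B - z = [[b - z, a*], [a, B₁ - z]]` and `R₁ = (B₁ - z)⁻¹`. Inverting by the Schur complement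
of the corner `b - z` gives
`tr (B - z)⁻¹ - tr R₁ = (1 + a* R₁² a) / (b - z - a* R₁ a)`.
The resolvent identity `R₁ - R₁* = 2i Im z · R₁* R₁` (also `= 2i Im z · R₁ R₁*`) shows
`Im (a* R₁ a) = Im z · ‖R₁ a‖²` and `‖R₁* a‖ = ‖R₁ a‖`. Hence the denominator has modulus at least
`Im z (1 + ‖R₁ a‖²)`, while by Cauchy–Schwarz the numerator has modulus at most `1 + ‖R₁ a‖²`.
-/

open Matrix

namespace Matrix

variable {m : Type*} [Fintype m]

theorem trace_fromBlocks {n α : Type*} [Fintype n] [AddCommMonoid α] (A : Matrix m m α)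
    (B : Matrix m n α) (C : Matrix n m α) (D : Matrix n n α) :
    (fromBlocks A B C D).trace = A.trace + D.trace := by
  simp [trace, Fintype.sum_sum_type]

theorem trace_submatrix_equiv {n α : Type*} [Fintype n] [AddCommMonoid α] (A : Matrix m m α)
    (e : n ≃ m) : (A.submatrix e e).trace = A.trace :=
  e.sum_comp fun i => A i i

theorem replicateRow_mul_mul_replicateCol {K : Type*} [Field K] (X : Matrix m m K)
    (r c : m → K) :
    replicateRow Unit r * X * replicateCol Unit c = of fun _ _ => r ⬝ᵥ X *ᵥ c := by
  ext
  rw [of_apply, dotProduct_mulVec]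
  simp [mul_apply, vecMul, dotProduct]

theorem star_dotProduct_conjTranspose_mul_mulVec {𝕜 : Type*} [RCLike 𝕜] (X Y : Matrix m m 𝕜)
    (a : m → 𝕜) :
    star a ⬝ᵥ (Xᴴ * Y) *ᵥ a = inner 𝕜 (WithLp.toLp 2 (X *ᵥ a)) (WithLp.toLp 2 (Y *ᵥ a)) := by
  rw [EuclideanSpace.inner_toLp_toLp, ← mulVec_mulVec, dotProduct_mulVec, vecMul_conjTranspose,
    star_star, dotProduct_comm]

theorem star_dotProduct_sub_conjTranspose_mulVec {𝕜 : Type*} [RCLike 𝕜] (X : Matrix m m 𝕜)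
    (a : m → 𝕜) :
    star a ⬝ᵥ (X - Xᴴ) *ᵥ a = 2 * RCLike.im (star a ⬝ᵥ X *ᵥ a) * RCLike.I := by
  rw [← RCLike.sub_conj, sub_mulVec, dotProduct_sub]
  congr 1
  rw [mulVec_conjTranspose, dotProduct_star, star_star, dotProduct_mulVec, RCLike.star_def]

variable [DecidableEq m]

section SchurComplement

variable {K : Type*} [Field K]

theorem trace_inv_fromBlocks {n : Type*} [Fintype n] [DecidableEq n]
    (A : Matrix m m K) (B : Matrix m n K) (C : Matrix n m K) (D : Matrix n n K)
    (hA : IsUnit A) (hS : IsUnit (D - C * A⁻¹ * B)) :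
    (fromBlocks A B C D)⁻¹.trace
      = A⁻¹.trace + ((D - C * A⁻¹ * B)⁻¹ * (1 + C * A⁻¹ * A⁻¹ * B)).trace := by
  have := hA.invertible
  have : Invertible (D - C * ⅟A * B) := by rw [invOf_eq_nonsing_inv]; exact hS.invertible
  have := fromBlocks₁₁Invertible A B C D
  have hcycle : (A⁻¹ * B * (D - C * A⁻¹ * B)⁻¹ * C * A⁻¹).trace
      = ((D - C * A⁻¹ * B)⁻¹ * (C * A⁻¹ * A⁻¹ * B)).trace := by
    simpa only [Matrix.mul_assoc] using trace_mul_comm (A⁻¹ * B) ((D - C * A⁻¹ * B)⁻¹ * C * A⁻¹)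
  rw [← invOf_eq_nonsing_inv, invOf_fromBlocks₁₁_eq, trace_fromBlocks]
  simp only [invOf_eq_nonsing_inv, trace_add, Matrix.mul_add, Matrix.mul_one, hcycle]
  abel

theorem trace_inv_fromBlocks_replicate (A : Matrix m m K) (c r : m → K) (δ : K)
    (hA : IsUnit A) (hd : δ - r ⬝ᵥ A⁻¹ *ᵥ c ≠ 0) :
    (fromBlocks A (replicateCol Unit c) (replicateRow Unit r) (of fun _ _ => δ))⁻¹.trace
      = A⁻¹.trace + (1 + r ⬝ᵥ (A⁻¹ * A⁻¹) *ᵥ c) / (δ - r ⬝ᵥ A⁻¹ *ᵥ c) := by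
  have hS : (of fun _ _ => δ) - replicateRow Unit r * A⁻¹ * replicateCol Unit c
      = of fun _ _ => δ - r ⬝ᵥ A⁻¹ *ᵥ c := by
    rw [replicateRow_mul_mul_replicateCol]; rfl
  rw [trace_inv_fromBlocks _ _ _ _ hA (by simp [hS, isUnit_iff_isUnit_det, hd]), hS,
    Matrix.mul_assoc (replicateRow Unit r) A⁻¹, replicateRow_mul_mul_replicateCol]
  simp [trace, mul_apply, div_eq_inv_mul]

theorem trace_inv_sub_trace_inv_submatrix_succ {n : ℕ} (M : Matrix (Fin (n + 1)) (Fin (n + 1)) K)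
    (r c : Fin n → K) (hr : ∀ j, M 0 j.succ = r j) (hc : ∀ i, M i.succ 0 = c i)
    (hA : IsUnit (M.submatrix Fin.succ Fin.succ))
    (hd : M 0 0 - r ⬝ᵥ (M.submatrix Fin.succ Fin.succ)⁻¹ *ᵥ c ≠ 0) :
    M⁻¹.trace - (M.submatrix Fin.succ Fin.succ)⁻¹.trace
      = (1 + r ⬝ᵥ ((M.submatrix Fin.succ Fin.succ)⁻¹ * (M.submatrix Fin.succ Fin.succ)⁻¹) *ᵥ c)
        / (M 0 0 - r ⬝ᵥ (M.submatrix Fin.succ Fin.succ)⁻¹ *ᵥ c) := by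
  let e : Fin n ⊕ Unit ≃ Fin (n + 1) :=
    ((finSuccEquiv n).trans (Equiv.optionEquivSumPUnit (Fin n))).symm
  have hblocks : M.submatrix e e = fromBlocks (M.submatrix Fin.succ Fin.succ)
      (replicateCol Unit c) (replicateRow Unit r) (of fun _ _ => M 0 0) := by
    ext (i | i) (j | j) <;> simp [e, hr, hc]
  rw [← trace_submatrix_equiv M⁻¹ e, ← inv_submatrix_equiv, hblocks,
    trace_inv_fromBlocks_replicate _ _ _ _ hA hd, add_sub_cancel_left]

end SchurComplement

theorem inv_sub_conjTranspose_inv {K : Type*} [Field K] [StarRing K] {A : Matrix m m K}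
    (hA : IsUnit A) : A⁻¹ - A⁻¹ᴴ = A⁻¹ᴴ * (Aᴴ - A) * A⁻¹ := by
  have hdet := (isUnit_iff_isUnit_det A).mp hA
  have h : A⁻¹ᴴ * Aᴴ = 1 := by
    rw [← conjTranspose_mul, mul_nonsing_inv _ hdet, conjTranspose_one]
  rw [Matrix.mul_sub, Matrix.sub_mul, h, Matrix.one_mul, Matrix.mul_assoc, mul_nonsing_inv _ hdet,
    Matrix.mul_one]

theorem inv_sub_conjTranspose_inv' {K : Type*} [Field K] [StarRing K] {A : Matrix m m K}
    (hA : IsUnit A) : A⁻¹ - A⁻¹ᴴ = A⁻¹ * (Aᴴ - A) * A⁻¹ᴴ := by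
  have hdet := (isUnit_iff_isUnit_det A).mp hA
  have h : Aᴴ * A⁻¹ᴴ = 1 := by
    rw [← conjTranspose_mul, nonsing_inv_mul _ hdet, conjTranspose_one]
  rw [Matrix.mul_sub, Matrix.sub_mul, Matrix.mul_assoc, h, Matrix.mul_one, nonsing_inv_mul _ hdet,
    Matrix.one_mul]

section Hermitian

variable {𝕜 : Type*} [RCLike 𝕜] {C : Matrix m m 𝕜}

theorem IsHermitian.isUnit_sub_smul_one (hC : C.IsHermitian) {z : 𝕜} (hz : RCLike.im z ≠ 0) :
    IsUnit (C - z • 1) := by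
  have hz' : z ∉ spectrum 𝕜 C := by
    rw [hC.spectrum_eq_image_range]
    rintro ⟨_, _, rfl⟩
    simp at hz
  rw [spectrum.notMem_iff, Algebra.algebraMap_eq_smul_one] at hz'
  simpa using hz'.neg

omit [Fintype m] in
theorem IsHermitian.conjTranspose_sub_smul_one_sub (hC : C.IsHermitian) (z : 𝕜) :
    (C - z • 1)ᴴ - (C - z • 1) = (z - star z) • 1 := by
  rw [conjTranspose_sub, hC.eq, conjTranspose_smul, conjTranspose_one, sub_smul]
  abel

end Hermitian

section Resolvent

variable {C : Matrix m m ℂ} (hC : C.IsHermitian) {z : ℂ} (hz : z.im ≠ 0) (a : m → ℂ)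
include hC hz

theorem IsHermitian.star_dotProduct_resolvent_sub_conjTranspose_mulVec :
    star a ⬝ᵥ ((C - z • 1)⁻¹ - (C - z • 1)⁻¹ᴴ) *ᵥ a
      = (z - star z) * ‖WithLp.toLp 2 ((C - z • 1)⁻¹ *ᵥ a)‖ ^ 2 := by
  rw [inv_sub_conjTranspose_inv (hC.isUnit_sub_smul_one hz), hC.conjTranspose_sub_smul_one_sub,
    Matrix.mul_smul, Matrix.smul_mul, Matrix.mul_one, smul_mulVec, dotProduct_smul,
    star_dotProduct_conjTranspose_mul_mulVec, inner_self_eq_norm_sq_to_K, smul_eq_mul]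
  rfl

theorem IsHermitian.star_dotProduct_resolvent_sub_conjTranspose_mulVec' :
    star a ⬝ᵥ ((C - z • 1)⁻¹ - (C - z • 1)⁻¹ᴴ) *ᵥ a
      = (z - star z) * ‖WithLp.toLp 2 ((C - z • 1)⁻¹ᴴ *ᵥ a)‖ ^ 2 := by
  have h := star_dotProduct_conjTranspose_mul_mulVec (C - z • 1)⁻¹ᴴ (C - z • 1)⁻¹ᴴ a
  rw [conjTranspose_conjTranspose, inner_self_eq_norm_sq_to_K] at h
  rw [inv_sub_conjTranspose_inv' (hC.isUnit_sub_smul_one hz), hC.conjTranspose_sub_smul_one_sub,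
    Matrix.mul_smul, Matrix.smul_mul, Matrix.mul_one, smul_mulVec, dotProduct_smul, h, smul_eq_mul]
  rfl

theorem IsHermitian.im_star_dotProduct_resolvent_mulVec :
    (star a ⬝ᵥ (C - z • 1)⁻¹ *ᵥ a).im = z.im * ‖WithLp.toLp 2 ((C - z • 1)⁻¹ *ᵥ a)‖ ^ 2 := by
  have h := hC.star_dotProduct_resolvent_sub_conjTranspose_mulVec hz a
  rw [star_dotProduct_sub_conjTranspose_mulVec, RCLike.star_def, Complex.sub_conj] at h
  have h2 : (2 * Complex.I) * ((star a ⬝ᵥ (C - z • 1)⁻¹ *ᵥ a).im : ℂ)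
      = (2 * Complex.I) * ((z.im * ‖WithLp.toLp 2 ((C - z • 1)⁻¹ *ᵥ a)‖ ^ 2 : ℝ) : ℂ) := by
    push_cast at h ⊢; linear_combination h
  exact_mod_cast mul_left_cancel₀ (by simp) h2

theorem IsHermitian.norm_conjTranspose_resolvent_mulVec :
    ‖WithLp.toLp 2 ((C - z • 1)⁻¹ᴴ *ᵥ a)‖ = ‖WithLp.toLp 2 ((C - z • 1)⁻¹ *ᵥ a)‖ := by
  have h := (hC.star_dotProduct_resolvent_sub_conjTranspose_mulVec' hz a).symm.trans
    (hC.star_dotProduct_resolvent_sub_conjTranspose_mulVec hz a)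
  have hz' : z - star z ≠ 0 := by
    rw [RCLike.star_def, Complex.sub_conj]; simpa using hz
  rw [mul_right_inj' hz'] at h
  exact (sq_eq_sq₀ (norm_nonneg _) (norm_nonneg _)).mp (by exact_mod_cast h)

theorem IsHermitian.norm_star_dotProduct_resolvent_mul_resolvent_mulVec_le :
    ‖star a ⬝ᵥ ((C - z • 1)⁻¹ * (C - z • 1)⁻¹) *ᵥ a‖
      ≤ ‖WithLp.toLp 2 ((C - z • 1)⁻¹ *ᵥ a)‖ ^ 2 := by
  calc ‖star a ⬝ᵥ ((C - z • 1)⁻¹ * (C - z • 1)⁻¹) *ᵥ a‖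
      = ‖inner ℂ (WithLp.toLp 2 ((C - z • 1)⁻¹ᴴ *ᵥ a)) (WithLp.toLp 2 ((C - z • 1)⁻¹ *ᵥ a))‖ := by
        rw [← star_dotProduct_conjTranspose_mul_mulVec, conjTranspose_conjTranspose]
    _ ≤ ‖WithLp.toLp 2 ((C - z • 1)⁻¹ᴴ *ᵥ a)‖ * ‖WithLp.toLp 2 ((C - z • 1)⁻¹ *ᵥ a)‖ :=
        norm_inner_le_norm _ _
    _ = ‖WithLp.toLp 2 ((C - z • 1)⁻¹ *ᵥ a)‖ ^ 2 := by
        rw [hC.norm_conjTranspose_resolvent_mulVec hz, sq]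

end Resolvent

end Matrix

theorem Complex.im_mul_one_add_le_norm_sub_sub {b z q : ℂ} {s : ℝ} (hb : b.im = 0)
    (hq : q.im = z.im * s) : z.im * (1 + s) ≤ ‖b - z - q‖ :=
  calc z.im * (1 + s) = -(b - z - q).im := by simp only [sub_im, hb, hq]; ring
    _ ≤ |(b - z - q).im| := neg_le_abs _
    _ ≤ ‖b - z - q‖ := abs_im_le_norm _

theorem Complex.norm_one_add_div_sub_sub_le {b z q₁ q₂ : ℂ} {s : ℝ} (hz : 0 < z.im) (hs : 0 ≤ s)
    (hb : b.im = 0) (h₁ : q₁.im = z.im * s) (h₂ : ‖q₂‖ ≤ s) :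
    ‖(1 + q₂) / (b - z - q₁)‖ ≤ 1 / z.im := by
  have hpos : 0 < z.im * (1 + s) := by positivity
  calc ‖(1 + q₂) / (b - z - q₁)‖ = ‖1 + q₂‖ / ‖b - z - q₁‖ := norm_div _ _
    _ ≤ (1 + s) / (z.im * (1 + s)) :=
        div_le_div₀ (by positivity) ((norm_add_le _ _).trans (by simpa using h₂)) hpos
          (im_mul_one_add_le_norm_sub_sub hb h₁)
    _ = 1 / z.im := by field_simp

/-- Interlacing-type bound: for a Hermitian matrix `B` and the principal
submatrix `B₁` obtained by deleting the first row and column,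
`|tr((B−zI)⁻¹) − tr((B₁−zI)⁻¹)| ≤ 1 / Im z`. -/
theorem abs_trace_resolvent_sub_trace_resolvent_submatrix_le {n : ℕ}
    (B : Matrix (Fin (n + 1)) (Fin (n + 1)) ℂ) (hB : B.IsHermitian)
    (z : ℂ) (hz : 0 < z.im) :
    ‖((B - z • 1)⁻¹).trace
        - (((B.submatrix Fin.succ Fin.succ - z • 1 : Matrix (Fin n) (Fin n) ℂ))⁻¹).trace‖
      ≤ 1 / z.im := by
  set C := B.submatrix Fin.succ Fin.succ
  have hC : C.IsHermitian := hB.submatrix Fin.succ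
  set a : Fin n → ℂ := fun i => B i.succ 0
  have hsub : (B - z • 1).submatrix Fin.succ Fin.succ = C - z • 1 := by
    ext i j
    simp [C, one_apply]
  have h00 : (B - z • 1) 0 0 = B 0 0 - z := by simp
  have hb : (B 0 0).im = 0 := Complex.conj_eq_iff_im.mp (hB.apply 0 0)
  have hq₁ := hC.im_star_dotProduct_resolvent_mulVec hz.ne' a
  have hden := Complex.im_mul_one_add_le_norm_sub_sub hb hq₁
  have key := trace_inv_sub_trace_inv_submatrix_succ (B - z • 1) (star a) a
    (fun j => by simp [a, ← hB.apply j.succ 0, one_apply, (Fin.succ_ne_zero j).symm])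
    (fun i => by simp [a])
    (hsub ▸ hC.isUnit_sub_smul_one hz.ne')
    (by rw [hsub, h00]; exact norm_pos_iff.mp (lt_of_lt_of_le (by positivity) hden))
  rw [hsub, h00] at key
  rw [key]
  exact Complex.norm_one_add_div_sub_sub_le hz (sq_nonneg _) hb hq₁
    (hC.norm_star_dotProduct_resolvent_mul_resolvent_mulVec_le hz.ne' a)
end
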